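/- arXiv:math/9412227 — 4 statements merged into one kernel-verified Lean document; each statement's English description precedes it below -/
import Mathlib

section
/- (Terminating Vandermonde/Chu identity.) Let n be a natural number and b, c ∈ ℂ with (c)_k ≠ 0 for all 0 ≤ k ≤ n and (c)_n ≠ 0. Then ∑_{k=0}^{n} ((−n)_k · (b)_k)/((c)_k · k!) = (c−b)_n/(c)_n. -/
/-- Pochhammer symbol (shifted factorial) of a complex number. -/
noncomputable def poch (a : ℂ) (k : ℕ) : ℂ := ∏ j ∈ Finset.range k, (a + j)

lemma poch_succ (a : ℂ) (k : ℕ) : poch a (k + 1) = poch a k * (a + k) :=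
  Finset.prod_range_succ _ _

lemma poch_succ' (a : ℂ) (k : ℕ) : poch a (k + 1) = a * poch (a + 1) k := by
  rw [poch, poch, Finset.prod_range_succ']
  simp only [Nat.cast_zero, add_zero, mul_comm]
  congr 1
  apply Finset.prod_congr rfl
  intro j _
  push_cast
  ring

lemma Ico_shift (c : ℂ) (k n : ℕ) :
    (∏ j ∈ Finset.Ico (k + 1) (n + 1), (c + j)) = ∏ j ∈ Finset.Ico k n, ((c + 1) + j) := by
  rw [Finset.prod_Ico_eq_prod_range, Finset.prod_Ico_eq_prod_range]
  have h : n + 1 - (k + 1) = n - k := by omega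
  rw [h]
  apply Finset.prod_congr rfl
  intro j _
  push_cast
  ring

lemma poch_neg_nat (n k : ℕ) (h : k ≤ n) :
    poch (-(n : ℂ)) k = (-1) ^ k * (n.choose k) * (k.factorial : ℂ) := by
  induction k with
  | zero => simp [poch]
  | succ k ih =>
    have hk : k ≤ n := le_of_lt (Nat.lt_of_succ_le h)
    rw [poch_succ, ih hk, Nat.factorial_succ]
    have hch : (n.choose (k + 1) * (k + 1) : ℕ) = n.choose k * (n - k) :=
      Nat.choose_succ_right_eq n k
    have hch' : ((n.choose (k + 1) : ℂ)) * (k + 1) = (n.choose k : ℂ) * ((n : ℂ) - k) := by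
      have := congrArg (Nat.cast : ℕ → ℂ) hch
      push_cast [Nat.cast_sub hk] at this
      exact this
    push_cast
    linear_combination ((-1 : ℂ) ^ k * (k.factorial : ℂ)) * hch'

lemma key (n : ℕ) (b c : ℂ) :
    ∑ k ∈ Finset.range (n + 1),
        (-1 : ℂ) ^ k * (n.choose k) * poch b k * ∏ j ∈ Finset.Ico k n, (c + j)
      = poch (c - b) n := by
  induction n generalizing b c with
  | zero => simp [poch]
  | succ n ih =>
    set g1 : ℕ → ℂ := fun k =>
      (-1 : ℂ) ^ k * (n.choose k) * poch b k * ∏ j ∈ Finset.Ico k (n + 1), (c + j) with hg1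
    set g2 : ℕ → ℂ := fun k =>
      (-1 : ℂ) ^ (k + 1) * (n.choose k) * poch b (k + 1) *
        ∏ j ∈ Finset.Ico (k + 1) (n + 1), (c + j) with hg2
    have hS : ∑ k ∈ Finset.range (n + 1 + 1),
          (-1 : ℂ) ^ k * ((n + 1).choose k) * poch b k * ∏ j ∈ Finset.Ico k (n + 1), (c + j)
        = (∑ k ∈ Finset.range (n + 1), g1 k) + (∑ k ∈ Finset.range (n + 1), g2 k) := by
      rw [Finset.sum_range_succ' _ (n + 1)]
      have hsplit : ∀ k ∈ Finset.range (n + 1),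
          (-1 : ℂ) ^ (k + 1) * ((n + 1).choose (k + 1)) * poch b (k + 1) *
              ∏ j ∈ Finset.Ico (k + 1) (n + 1), (c + j)
            = g1 (k + 1) + g2 k := by
        intro k _
        rw [hg1, hg2, Nat.choose_succ_succ]
        push_cast
        ring
      rw [Finset.sum_congr rfl hsplit, Finset.sum_add_distrib]
      have h0 : (-1 : ℂ) ^ 0 * (((n + 1).choose 0 : ℕ) : ℂ) * poch b 0 *
          ∏ j ∈ Finset.Ico 0 (n + 1), (c + j) = g1 0 := by
        simp [hg1]
      have hlast : ∑ k ∈ Finset.range (n + 1), g1 (k + 1) + g1 0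
          = ∑ k ∈ Finset.range (n + 1), g1 k := by
        rw [← Finset.sum_range_succ' g1 (n + 1), Finset.sum_range_succ]
        have : g1 (n + 1) = 0 := by
          simp [hg1, Nat.choose_succ_self]
        rw [this, add_zero]
      rw [h0]
      linear_combination hlast
    have hS1 : ∑ k ∈ Finset.range (n + 1), g1 k = (c + n) * poch (c - b) n := by
      have : ∀ k ∈ Finset.range (n + 1), g1 k =
          (c + n) * ((-1 : ℂ) ^ k * (n.choose k) * poch b k * ∏ j ∈ Finset.Ico k n, (c + j)) := by
        intro k hk
        have hk' : k ≤ n := Nat.lt_succ_iff.mp (Finset.mem_range.mp hk)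
        rw [hg1]
        simp only
        rw [Finset.prod_Ico_succ_top hk']
        ring
      rw [Finset.sum_congr rfl this, ← Finset.mul_sum, ih]
    have hS2 : ∑ k ∈ Finset.range (n + 1), g2 k = -b * poch (c - b) n := by
      have : ∀ k ∈ Finset.range (n + 1), g2 k =
          -b * ((-1 : ℂ) ^ k * (n.choose k) * poch (b + 1) k *
            ∏ j ∈ Finset.Ico k n, ((c + 1) + j)) := by
        intro k _
        rw [hg2]
        simp only
        rw [poch_succ', Ico_shift]
        ring
      rw [Finset.sum_congr rfl this, ← Finset.mul_sum, ih (b + 1) (c + 1)]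
      have : c + 1 - (b + 1) = c - b := by ring
      rw [this]
    rw [hS, hS1, hS2, poch_succ]
    ring


/-- Terminating Vandermonde/Chu identity. -/
theorem vandermonde_identity (n : ℕ) (b c : ℂ)
    (hc : ∀ k ≤ n, poch c k ≠ 0) (hcn : poch c n ≠ 0) :
    ∑ k ∈ Finset.range (n + 1),
        poch (-(n : ℂ)) k * poch b k / (poch c k * (k.factorial : ℂ))
      = poch (c - b) n / poch c n := by
  have hterm : ∀ k ∈ Finset.range (n + 1),
      poch (-(n : ℂ)) k * poch b k / (poch c k * (k.factorial : ℂ))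
        = ((-1 : ℂ) ^ k * (n.choose k) * poch b k * ∏ j ∈ Finset.Ico k n, (c + j))
            / poch c n := by
    intro k hk
    have hk' : k ≤ n := Nat.lt_succ_iff.mp (Finset.mem_range.mp hk)
    have hsplit : poch c n = poch c k * ∏ j ∈ Finset.Ico k n, (c + j) := by
      rw [poch, poch, Finset.prod_range_mul_prod_Ico _ hk']
    have h1 : poch c k ≠ 0 := hc k hk'
    have h3 : (∏ j ∈ Finset.Ico k n, (c + j)) ≠ 0 := by
      intro h
      apply hcn
      rw [hsplit, h, mul_zero]
    have h2 : (k.factorial : ℂ) ≠ 0 := Nat.cast_ne_zero.mpr k.factorial_ne_zero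
    rw [poch_neg_nat n k hk', hsplit]
    field_simp
  rw [Finset.sum_congr rfl hterm, ← Finset.sum_div, key]
end

section
/- (Gessel–Stanton (5.25).) For every natural number n: ∑_{k=0}^{n} ((−n)_k (1/2)_k)/(((n+3)/2)_k · k!) · 4^k equals 0 if n is odd, and equals ((1/2)_{n/2} (3/2)_{n/2})/((5/6)_{n/2} (7/6)_{n/2}) if n is even (n/2 denoting the natural number n divided by 2). -/
lemma poch_zero (a : ℂ) : poch a 0 = 1 := by simp [poch]

lemma poch_ne_zero' {a : ℂ} (h : ∀ j : ℕ, a + j ≠ 0) (k : ℕ) : poch a k ≠ 0 :=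
  Finset.prod_ne_zero_iff.2 fun j _ => h j

lemma poch_neg_nat_zero (n k : ℕ) (h : n < k) : poch (-(n : ℂ)) k = 0 :=
  Finset.prod_eq_zero (Finset.mem_range.2 h) (by simp)

lemma ne_zero_of_nat (m : ℕ) (x : ℂ) (hx : ((m : ℕ) : ℂ) = x) (h : m ≠ 0) : x ≠ 0 := by
  rw [← hx]; exact_mod_cast h

lemma poch_half_shift_ne_zero (n k : ℕ) : poch (((n : ℂ) + 3) / 2) k ≠ 0 := by
  refine poch_ne_zero' (fun j hj => ?_) k
  have h2 : ((n + 3 + 2 * j : ℕ) : ℂ) = 0 := by push_cast; linear_combination 2 * hj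
  exact absurd (Nat.cast_eq_zero.mp h2) (by omega)

lemma poch_half_shift5_ne_zero (n k : ℕ) : poch (((n : ℂ) + 5) / 2) k ≠ 0 := by
  refine poch_ne_zero' (fun j hj => ?_) k
  have h2 : ((n + 5 + 2 * j : ℕ) : ℂ) = 0 := by push_cast; linear_combination 2 * hj
  exact absurd (Nat.cast_eq_zero.mp h2) (by omega)

lemma key1 (a : ℂ) (k : ℕ) :
    poch (a - 2) k * ((a + k - 2) * (a + k - 1)) = poch a k * ((a - 2) * (a - 1)) := by
  induction k with
  | zero => simp [poch_zero]
  | succ k ih =>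
      rw [poch_succ, poch_succ]
      push_cast
      linear_combination (a + k) * ih

lemma key2 (a : ℂ) (k : ℕ) : poch (a + 1) k * a = poch a k * (a + k) := by
  induction k with
  | zero => simp [poch_zero]
  | succ k ih =>
      rw [poch_succ, poch_succ]
      push_cast
      linear_combination (a + 1 + k) * ih

noncomputable def GS_T (n k : ℕ) : ℂ :=
  poch (-(n : ℂ)) k * poch (1 / 2) k /
    (poch (((n : ℂ) + 3) / 2) k * (k.factorial : ℂ)) * (4 : ℂ) ^ k

noncomputable def GS_t2 (n k : ℕ) : ℂ :=
  poch (-(n : ℂ) - 2) k * poch (1 / 2) k /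
    (poch (((n : ℂ) + 5) / 2) k * (k.factorial : ℂ)) * (4 : ℂ) ^ k

lemma GS_T_shift (n k : ℕ) : GS_T (n + 2) k = GS_t2 n k := by
  rw [GS_T, GS_t2,
    show -(((n + 2 : ℕ) : ℂ)) = -(n : ℂ) - 2 by push_cast; ring,
    show (((n + 2 : ℕ) : ℂ) + 3) / 2 = ((n : ℂ) + 5) / 2 by push_cast; ring]

lemma GS_t2_mul (n j : ℕ) :
    GS_t2 n j * (poch (((n : ℂ) + 5) / 2) j * (j.factorial : ℂ)) =
      poch (-(n : ℂ) - 2) j * poch (1 / 2) j * (4 : ℂ) ^ j := by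
  have hd : poch (((n : ℂ) + 5) / 2) j * (j.factorial : ℂ) ≠ 0 :=
    mul_ne_zero (poch_half_shift5_ne_zero n j) (Nat.cast_ne_zero.2 j.factorial_ne_zero)
  rw [GS_t2, div_mul_eq_mul_div, div_mul_cancel₀ _ hd]

lemma GS_T_mul (n j : ℕ) :
    GS_T n j * (poch (((n : ℂ) + 3) / 2) j * (j.factorial : ℂ)) =
      poch (-(n : ℂ)) j * poch (1 / 2) j * (4 : ℂ) ^ j := by
  have hd : poch (((n : ℂ) + 3) / 2) j * (j.factorial : ℂ) ≠ 0 :=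
    mul_ne_zero (poch_half_shift_ne_zero n j) (Nat.cast_ne_zero.2 j.factorial_ne_zero)
  rw [GS_T, div_mul_eq_mul_div, div_mul_cancel₀ _ hd]

noncomputable def GS_G (n k : ℕ) : ℂ :=
  (k : ℂ) * (((n : ℂ) + 3) - (3 * (n : ℂ) + 7) * k - 6 * (k : ℂ) ^ 2) * GS_t2 n k

set_option maxHeartbeats 2000000 in
lemma GS_step (n k : ℕ) :
    ((n : ℂ) + 2) * ((3 * (n : ℂ) + 5) * (3 * (n : ℂ) + 7) * GS_t2 n k
      - 9 * ((n : ℂ) + 1) * ((n : ℂ) + 3) * GS_T n k)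
    = GS_G n (k + 1) - GS_G n k := by
  have hE0 : poch (((n : ℂ) + 5) / 2) k ≠ 0 := poch_half_shift5_ne_zero n k
  have hF : ((k.factorial : ℕ) : ℂ) ≠ 0 := Nat.cast_ne_zero.2 k.factorial_ne_zero
  have hn3 : (n : ℂ) + 3 ≠ 0 := ne_zero_of_nat (n + 3) _ (by push_cast; ring) (by omega)
  have hh : ((n : ℂ) + 5) / 2 + (k : ℂ) ≠ 0 := by
    intro h
    have h2 : ((n + 5 + 2 * k : ℕ) : ℂ) = 0 := by push_cast; linear_combination 2 * h
    exact absurd (Nat.cast_eq_zero.mp h2) (by omega)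
  have hk1 : (k : ℂ) + 1 ≠ 0 := ne_zero_of_nat (k + 1) _ (by push_cast; ring) (by omega)
  have s5 := key1 (-(n : ℂ)) k
  have s6 : poch (((n : ℂ) + 5) / 2) k * ((n : ℂ) + 3) =
      poch (((n : ℂ) + 3) / 2) k * ((n : ℂ) + 3 + 2 * k) := by
    have h := key2 (((n : ℂ) + 3) / 2) k
    rw [show ((n : ℂ) + 3) / 2 + 1 = ((n : ℂ) + 5) / 2 by ring] at h
    linear_combination 2 * h
  have m1 := GS_t2_mul n k
  have m2 : GS_t2 n (k + 1) *
        ((poch (((n : ℂ) + 5) / 2) k * (((n : ℂ) + 5) / 2 + k)) *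
          (((k : ℂ) + 1) * (k.factorial : ℂ))) =
      (poch (-(n : ℂ) - 2) k * (-(n : ℂ) - 2 + k)) *
        (poch (1 / 2) k * (1 / 2 + (k : ℂ))) * (4 * (4 : ℂ) ^ k) := by
    have h := GS_t2_mul n (k + 1)
    rw [poch_succ, poch_succ, poch_succ, Nat.factorial_succ] at h
    push_cast at h
    linear_combination h
  have m3 : GS_T n k * (poch (((n : ℂ) + 5) / 2) k * (((n : ℂ) + 3) * (k.factorial : ℂ))) =
      poch (-(n : ℂ)) k * poch (1 / 2) k * (4 : ℂ) ^ k * ((n : ℂ) + 3 + 2 * k) := by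
    have hT := GS_T_mul n k
    linear_combination (GS_T n k * (k.factorial : ℂ)) * s6 + ((n : ℂ) + 3 + 2 * k) * hT
  have hM : poch (((n : ℂ) + 5) / 2) k *
      (poch (((n : ℂ) + 5) / 2) k * (((n : ℂ) + 5) / 2 + k)) *
      (((n : ℂ) + 3) * (k.factorial : ℂ)) * (((k : ℂ) + 1) * (k.factorial : ℂ)) ≠ 0 :=
    mul_ne_zero (mul_ne_zero (mul_ne_zero hE0 (mul_ne_zero hE0 hh))
      (mul_ne_zero hn3 hF)) (mul_ne_zero hk1 hF)
  simp only [GS_G]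
  push_cast
  apply mul_left_cancel₀ hM
  linear_combination
    (poch (((n : ℂ) + 5) / 2) k * (((n : ℂ) + 5) / 2 + k) * ((k : ℂ) + 1) * ((n : ℂ) + 3) *
        (k.factorial : ℂ) *
        (((n : ℂ) + 2) * ((3 * (n : ℂ) + 5) * (3 * (n : ℂ) + 7)) +
          (k : ℂ) * (((n : ℂ) + 3) - (3 * (n : ℂ) + 7) * k - 6 * (k : ℂ) ^ 2))) * m1
    - (poch (((n : ℂ) + 5) / 2) k * ((n : ℂ) + 3) * (k.factorial : ℂ) *
        (((k : ℂ) + 1) * (((n : ℂ) + 3) - (3 * (n : ℂ) + 7) * ((k : ℂ) + 1) -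
          6 * ((k : ℂ) + 1) ^ 2))) * m2
    - (((n : ℂ) + 2) * (9 * ((n : ℂ) + 1) * ((n : ℂ) + 3)) * poch (((n : ℂ) + 5) / 2) k *
        (((n : ℂ) + 5) / 2 + k) * ((k : ℂ) + 1) * (k.factorial : ℂ)) * m3
    + (9 * ((n : ℂ) + 3) * ((n : ℂ) + 3 + 2 * k) * poch (((n : ℂ) + 5) / 2) k *
        (((n : ℂ) + 5) / 2 + k) * ((k : ℂ) + 1) * (k.factorial : ℂ) * poch (1 / 2) k *
        (4 : ℂ) ^ k) * s5

lemma GS_rec (n : ℕ) :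
    (3 * (n : ℂ) + 5) * (3 * (n : ℂ) + 7) * ∑ k ∈ Finset.range (n + 3), GS_t2 n k
      = 9 * ((n : ℂ) + 1) * ((n : ℂ) + 3) * ∑ k ∈ Finset.range (n + 3), GS_T n k := by
  have hn2 : (n : ℂ) + 2 ≠ 0 := ne_zero_of_nat (n + 2) _ (by push_cast; ring) (by omega)
  have key : ∑ k ∈ Finset.range (n + 3),
      ((n : ℂ) + 2) * ((3 * (n : ℂ) + 5) * (3 * (n : ℂ) + 7) * GS_t2 n k
        - 9 * ((n : ℂ) + 1) * ((n : ℂ) + 3) * GS_T n k) = 0 := by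
    rw [Finset.sum_congr rfl (fun k _ => GS_step n k), Finset.sum_range_sub (GS_G n)]
    have h1 : GS_G n 0 = 0 := by simp [GS_G]
    have h2 : GS_G n (n + 3) = 0 := by
      have hz : poch (-(n : ℂ) - 2) (n + 3) = 0 := by
        have h := poch_neg_nat_zero (n + 2) (n + 3) (by omega)
        rwa [show -(((n + 2 : ℕ)) : ℂ) = -(n : ℂ) - 2 by push_cast; ring] at h
      simp [GS_G, GS_t2, hz]
    rw [h1, h2, sub_zero]
  have expand : ∑ k ∈ Finset.range (n + 3),
      ((n : ℂ) + 2) * ((3 * (n : ℂ) + 5) * (3 * (n : ℂ) + 7) * GS_t2 n k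
        - 9 * ((n : ℂ) + 1) * ((n : ℂ) + 3) * GS_T n k)
      = ((n : ℂ) + 2) * ((3 * (n : ℂ) + 5) * (3 * (n : ℂ) + 7) *
          ∑ k ∈ Finset.range (n + 3), GS_t2 n k)
        - ((n : ℂ) + 2) * (9 * ((n : ℂ) + 1) * ((n : ℂ) + 3) *
          ∑ k ∈ Finset.range (n + 3), GS_T n k) := by
    rw [Finset.mul_sum, Finset.mul_sum, Finset.mul_sum, Finset.mul_sum,
      ← Finset.sum_sub_distrib]
    exact Finset.sum_congr rfl fun k _ => by ring
  rw [expand] at key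
  apply mul_left_cancel₀ hn2
  linear_combination key

lemma GS_T_ext (n : ℕ) :
    ∑ k ∈ Finset.range (n + 3), GS_T n k = ∑ k ∈ Finset.range (n + 1), GS_T n k := by
  symm
  apply Finset.sum_subset (Finset.range_subset_range.2 (by omega))
  intro x _ hx
  have hnx : n < x := by
    by_contra h'
    exact hx (Finset.mem_range.2 (by omega))
  rw [GS_T, poch_neg_nat_zero n x hnx, zero_mul, zero_div, zero_mul]

lemma poch_56_ne_zero (m : ℕ) : poch (5 / 6 : ℂ) m ≠ 0 := by
  refine poch_ne_zero' (fun j hj => ?_) m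
  have h2 : ((5 + 6 * j : ℕ) : ℂ) = 0 := by push_cast; linear_combination 6 * hj
  exact absurd (Nat.cast_eq_zero.mp h2) (by omega)

lemma poch_76_ne_zero (m : ℕ) : poch (7 / 6 : ℂ) m ≠ 0 := by
  refine poch_ne_zero' (fun j hj => ?_) m
  have h2 : ((7 + 6 * j : ℕ) : ℂ) = 0 := by push_cast; linear_combination 6 * hj
  exact absurd (Nat.cast_eq_zero.mp h2) (by omega)

noncomputable def GS_R (n : ℕ) : ℂ :=
  if Even n then
    poch (1 / 2) (n / 2) * poch (3 / 2) (n / 2) /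
      (poch (5 / 6) (n / 2) * poch (7 / 6) (n / 2))
  else 0

lemma GS_main (n : ℕ) : ∑ k ∈ Finset.range (n + 1), GS_T n k = GS_R n := by
  induction n using Nat.twoStepInduction with
  | zero =>
      rw [GS_R, if_pos (by decide)]
      norm_num [Finset.sum_range_one, GS_T, poch_zero]
  | one =>
      rw [GS_R, if_neg (by decide)]
      rw [Finset.sum_range_succ, Finset.sum_range_one]
      norm_num [GS_T, poch_zero, poch_succ, Nat.factorial]
  | more n ih _ =>
      have hc1 : (3 * (n : ℂ) + 5) * (3 * (n : ℂ) + 7) ≠ 0 :=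
        mul_ne_zero (ne_zero_of_nat (3 * n + 5) _ (by push_cast; ring) (by omega))
          (ne_zero_of_nat (3 * n + 7) _ (by push_cast; ring) (by omega))
      have hrec := GS_rec n
      rw [GS_T_ext, ih] at hrec
      have hsum : ∑ k ∈ Finset.range (n + 2 + 1), GS_T (n + 2) k
          = ∑ k ∈ Finset.range (n + 3), GS_t2 n k :=
        Finset.sum_congr rfl fun k _ => GS_T_shift n k
      rw [hsum]
      rcases Nat.even_or_odd n with he | ho
      · -- even case
        obtain ⟨m, rfl⟩ := he
        rw [GS_R, if_pos ⟨m, rfl⟩, show (m + m) / 2 = m by omega] at hrec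
        rw [GS_R, if_pos ⟨m + 1, by ring⟩, show (m + m + 2) / 2 = m + 1 by omega,
          poch_succ, poch_succ, poch_succ, poch_succ]
        have h56 : poch (5 / 6 : ℂ) m ≠ 0 := poch_56_ne_zero m
        have h76 : poch (7 / 6 : ℂ) m ≠ 0 := poch_76_ne_zero m
        have hq56 : (5 / 6 : ℂ) + m ≠ 0 := by
          intro h
          have h2 : ((5 + 6 * m : ℕ) : ℂ) = 0 := by push_cast; linear_combination 6 * h
          exact absurd (Nat.cast_eq_zero.mp h2) (by omega)
        have hq76 : (7 / 6 : ℂ) + m ≠ 0 := by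
          intro h
          have h2 : ((7 + 6 * m : ℕ) : ℂ) = 0 := by push_cast; linear_combination 6 * h
          exact absurd (Nat.cast_eq_zero.mp h2) (by omega)
        apply mul_left_cancel₀ hc1
        rw [hrec]
        push_cast at *
        set U := poch (1 / 2 : ℂ) m
        set V := poch (3 / 2 : ℂ) m
        set P := poch (5 / 6 : ℂ) m
        set Q := poch (7 / 6 : ℂ) m
        set r5 : ℂ := 5 / 6 + (m : ℂ) with hr5
        set r7 : ℂ := 7 / 6 + (m : ℂ) with hr7
        field_simp
        ring
      · -- odd case
        rw [GS_R, if_neg (Nat.not_even_iff_odd.mpr (ho.add_even even_two))]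
        rw [GS_R, if_neg (Nat.not_even_iff_odd.mpr ho)] at hrec
        have h0 : (3 * (n : ℂ) + 5) * (3 * (n : ℂ) + 7) *
            ∑ k ∈ Finset.range (n + 3), GS_t2 n k = 0 := by rw [hrec]; ring
        exact (mul_eq_zero.mp h0).resolve_left hc1

/-- Gessel–Stanton (5.25). -/
theorem gessel_stanton_5_25 (n : ℕ) :
    ∑ k ∈ Finset.range (n + 1),
        poch (-(n : ℂ)) k * poch (1 / 2) k /
          (poch (((n : ℂ) + 3) / 2) k * (k.factorial : ℂ)) * (4 : ℂ) ^ k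
      = if Even n then
          poch (1 / 2) (n / 2) * poch (3 / 2) (n / 2) /
            (poch (5 / 6) (n / 2) * poch (7 / 6) (n / 2))
        else 0 := GS_main n
end

section
/- For every natural number n ≥ 1: −∑_{k=0}^{n} (−2)^n · C(n,k) · B(k/2, n) = 1, where C(n,k) is the ordinary binomial coefficient and B(k/2, n) := (∏_{j=0}^{n−1} (k/2 − j))/n! is the generalized binomial coefficient with upper entry the rational number k/2. -/
open Finset Polynomial

/-- Generalized binomial coefficient with complex upper entry. -/
noncomputable def genBinom (x : ℂ) (n : ℕ) : ℂ :=
  (∏ j ∈ Finset.range n, (x - j)) / (n.factorial : ℂ)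

lemma oddMul (m : ℕ) : (∏ t ∈ range m, (2*(t:ℂ)+1)) * (2^m * m.factorial) = (2*m).factorial := by
  induction m with
  | zero => simp
  | succ m ih =>
    rw [prod_range_succ, show 2*(m+1) = 2*m+1+1 by ring, Nat.factorial_succ, Nat.factorial_succ,
      Nat.factorial_succ]
    push_cast
    push_cast at ih
    linear_combination (2*(m:ℂ)+1) * 2 * ((m:ℂ)+1) * ih

lemma oddVal (m : ℕ) : (∏ t ∈ range m, (2*(t:ℂ)+1)) = (2*m).factorial / (2^m * m.factorial) := by
  rw [eq_div_iff (mul_ne_zero (pow_ne_zero _ two_ne_zero) (Nat.cast_ne_zero.2 m.factorial_ne_zero)), oddMul]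

lemma oddMul2 (m : ℕ) :
    (∏ t ∈ range (m+1), (2*(t:ℂ)+1)) * (2^m * m.factorial) = (2*m+1).factorial := by
  induction m with
  | zero => simp
  | succ m ih =>
    rw [prod_range_succ, show 2*(m+1)+1 = 2*m+1+1+1 by ring, Nat.factorial_succ,
      Nat.factorial_succ (2*m+1+1), Nat.factorial_succ (2*m+1)]
    push_cast
    push_cast at ih
    linear_combination (2*(m:ℂ)+3) * 2 * ((m:ℂ)+1) * ih

lemma oddVal2 (m : ℕ) :
    (∏ t ∈ range (m+1), (2*(t:ℂ)+1)) = (2*m+1).factorial / (2^m * m.factorial) := by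
  rw [eq_div_iff (mul_ne_zero (pow_ne_zero _ two_ne_zero) (Nat.cast_ne_zero.2 m.factorial_ne_zero)), oddMul2]

lemma genBinom_nat_zero (j n : ℕ) (h : j < n) : genBinom (j : ℂ) n = 0 := by
  unfold genBinom
  rw [Finset.prod_eq_zero (Finset.mem_range.2 h) (by simp)]
  simp

lemma key_poly (m : ℕ) :
    ∑ j ∈ range (m+1), (-1:ℤ)^j * m.choose j * ((2*(m-j)).choose m) = 2^m := by
  have h1 : (((Polynomial.X:ℤ[X])+1)^2 - 1)^m = Polynomial.X^m * (Polynomial.X+2)^m := by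
    rw [← mul_pow]; ring_nf
  have h2 := congrArg (fun p => Polynomial.coeff p m) h1
  rw [sub_pow] at h2
  rw [Polynomial.finset_sum_coeff] at h2
  simp only [← pow_mul, one_pow, mul_one] at h2
  have h3 : ∀ i ∈ range (m+1),
      ((-1:ℤ[X])^(i+m) * (Polynomial.X+1)^(2*i) * ((m.choose i : ℕ) : ℤ[X])).coeff m
        = (-1:ℤ)^(i+m) * ((2*i).choose m) * (m.choose i) := by
    intro i _
    rw [show ((-1:ℤ[X])^(i+m) * (Polynomial.X+1)^(2*i) * ((m.choose i : ℕ) : ℤ[X]))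
        = Polynomial.C ((-1:ℤ)^(i+m) * (m.choose i)) * (Polynomial.X+1)^(2*i) by
        simp [Polynomial.C_mul, Polynomial.C_pow]; ring,
      Polynomial.coeff_C_mul, Polynomial.coeff_X_add_one_pow]
    ring
  rw [Finset.sum_congr rfl h3] at h2
  have h4 : (Polynomial.X^m * ((Polynomial.X:ℤ[X])+2)^m).coeff m = 2^m := by
    have := Polynomial.coeff_X_pow_mul (((Polynomial.X:ℤ[X])+2)^m) m 0
    rw [zero_add] at this
    rw [this]
    simp [Polynomial.coeff_zero_eq_eval_zero]
  rw [h4] at h2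
  rw [← h2, ← Finset.sum_range_reflect]
  apply Finset.sum_congr rfl
  intro j hj
  rw [mem_range] at hj
  have hj' : j ≤ m := by omega
  rw [show m + 1 - 1 - j = m - j by omega, show m - (m - j) = j by omega,
    Nat.choose_symm hj',
    show (-1:ℤ)^(m - j) * (m.choose j) * ((2*j).choose m)
      = (m.choose j) * ((2*j).choose m) * (-1:ℤ)^(m-j) by ring,
    show (-1:ℤ)^(j + m) * ((2*j).choose m) * (m.choose j)
      = (m.choose j) * ((2*j).choose m) * (-1:ℤ)^(j+m) by ring]
  congr 1
  rw [show j + m = m - j + 2*j by omega, pow_add, pow_mul]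
  simp

lemma prodA (j : ℕ) : ∏ i ∈ range (j+1), ((2*(j:ℂ)+1)/2 - i)
    = (∏ t ∈ range (j+1), (2*(t:ℂ)+1)) / 2^(j+1) := by
  have h1 : ∏ i ∈ range (j+1), ((2*(j:ℂ)+1)/2 - i)
      = ∏ i ∈ range (j+1), (fun t : ℕ => (2*(t:ℂ)+1)/2) (j+1-1-i) := by
    apply prod_congr rfl
    intro i hi
    rw [mem_range] at hi
    simp only [show j+1-1-i = j-i by omega, Nat.cast_sub (by omega : i ≤ j)]
    ring
  rw [h1, Finset.prod_range_reflect (fun t : ℕ => (2*(t:ℂ)+1)/2) (j+1), prod_div_distrib,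
    prod_const, card_range]

lemma prodB (j e : ℕ) : ∏ i ∈ range e, ((2*(j:ℂ)+1)/2 - (j+1+i))
    = (-1)^e * (∏ t ∈ range e, (2*(t:ℂ)+1)) / 2^e := by
  have h1 : ∏ i ∈ range e, ((2*(j:ℂ)+1)/2 - (j+1+i))
      = ∏ i ∈ range e, ((-1) * ((2*(i:ℂ)+1) * (2:ℂ)⁻¹)) := by
    apply prod_congr rfl
    intro i _
    field_simp
    ring
  rw [h1, prod_mul_distrib, prod_mul_distrib, prod_const, prod_const, card_range]
  rw [div_eq_mul_inv, inv_pow]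
  ring

lemma term_odd (j e : ℕ) :
    (-2:ℂ)^(2*j+e+1) * ((2*j+e+1).choose (2*j+1) : ℂ) * genBinom ((2*j+1 : ℂ)/2) (2*j+e+1)
    = (-1:ℂ)^(j+1) * ((2*j+e).choose j : ℂ) * ((2*(j+e)).choose (2*j+e) : ℂ) / 2^(2*j+e) := by
  unfold genBinom
  rw [show 2*j+e+1 = (j+1)+(j+e) by ring, prod_range_add]
  have hA : ∏ i ∈ range (j+1), ((2*(j:ℂ)+1)/2 - i)
      = (∏ t ∈ range (j+1), (2*(t:ℂ)+1)) / 2^(j+1) := prodA j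
  have hB := prodB j (j+e)
  push_cast at hA hB ⊢
  rw [hA, hB, oddVal2, oddVal]
  rw [Nat.cast_choose ℂ (show 2*j+1 ≤ j+1+(j+e) by omega),
      Nat.cast_choose ℂ (show j ≤ 2*j+e by omega),
      Nat.cast_choose ℂ (show 2*j+e ≤ 2*(j+e) by omega),
      show j+1+(j+e) - (2*j+1) = e by omega,
      show 2*j+e - j = j+e by omega,
      show 2*(j+e) - (2*j+e) = e by omega,
      neg_pow,
      show (-1:ℂ)^(j+1+(j+e)) = (-1)^(j+1) * (-1)^(j+e) by rw [← pow_add]]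
  have hf : ∀ m : ℕ, ((m.factorial : ℂ)) ≠ 0 := fun m => Nat.cast_ne_zero.2 m.factorial_ne_zero
  have h2 : (2:ℂ) ≠ 0 := two_ne_zero
  have hsq : ((-1:ℂ)^(j+e)) * ((-1:ℂ)^(j+e)) = 1 := by
    rw [← pow_add, ← two_mul, pow_mul]; simp
  field_simp [hf]
  linear_combination ((2:ℂ) ^ (j + 1 + (j + e)) * 2 ^ (2 * j + e)) * hsq


lemma key_complex (m : ℕ) :
    ∑ j ∈ range (m+1), (-1:ℂ)^j * (m.choose j) * ((2*(m-j)).choose m) = 2^m := by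
  have := congrArg (Int.cast : ℤ → ℂ) (key_poly m)
  push_cast at this
  convert this using 1

/-- The paper's example identity proved by the extended WZ method
with l = 2, m = 1. -/
theorem extended_wz_example (n : ℕ) (hn : 1 ≤ n) :
    -∑ k ∈ Finset.range (n + 1),
        (-2 : ℂ) ^ n * (n.choose k : ℂ) * genBinom ((k : ℂ) / 2) n = 1 := by
  obtain ⟨m, rfl⟩ : ∃ m, n = m + 1 := ⟨n - 1, by omega⟩
  set f : ℕ → ℂ := fun k =>
    (-2 : ℂ) ^ (m+1) * ((m+1).choose k : ℂ) * genBinom ((k : ℂ) / 2) (m+1) with hf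
  have hsplit : ∑ k ∈ range (m+1+1), f k = ∑ j ∈ range ((m+2)/2), f (2*j+1) := by
    rw [← Finset.sum_filter_add_sum_filter_not (range (m+1+1)) (fun k => Odd k)]
    have heven : ∑ k ∈ Finset.filter (fun k => ¬ Odd k) (range (m+1+1)), f k = 0 := by
      apply Finset.sum_eq_zero
      intro k hk
      simp only [Finset.mem_filter, Finset.mem_range, Nat.not_odd_iff_even] at hk
      obtain ⟨i, hi⟩ := hk.2
      have hiv : ((k:ℂ))/2 = ((i:ℕ):ℂ) := by
        rw [hi]; push_cast; ring
      rw [hf]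
      simp only
      rw [hiv, genBinom_nat_zero i (m+1) (by omega), mul_zero]
    rw [heven, add_zero]
    apply Finset.sum_nbij' (i := fun k => k/2) (j := fun j => 2*j+1)
    · intro a ha
      simp only [Finset.mem_filter, Finset.mem_range] at ha
      obtain ⟨k, hk⟩ := ha.2
      rw [Finset.mem_range]
      omega
    · intro a ha
      rw [Finset.mem_range] at ha
      simp only [Finset.mem_filter, Finset.mem_range]
      constructor
      · omega
      · exact ⟨a, by omega⟩
    · intro a ha
      simp only [Finset.mem_filter, Finset.mem_range] at ha
      obtain ⟨k, hk⟩ := ha.2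
      omega
    · intro a _
      omega
    · intro a ha
      simp only [Finset.mem_filter, Finset.mem_range] at ha
      obtain ⟨k, hk⟩ := ha.2
      congr 1
      omega
  have hterm : ∀ j ∈ range ((m+2)/2),
      f (2*j+1) = (-1:ℂ)^(j+1) * (m.choose j) * ((2*(m-j)).choose m) / 2^m := by
    intro j hj
    rw [Finset.mem_range] at hj
    have h2j : 2*j ≤ m := by omega
    have ht := term_odd j (m - 2*j)
    rw [show 2*j+(m-2*j)+1 = m+1 by omega, show 2*j+(m-2*j) = m by omega,
      show j+(m-2*j) = m - j by omega] at ht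
    rw [hf]
    simp only
    rw [show (((2*j+1 : ℕ)):ℂ) = 2*(j:ℂ)+1 by push_cast; ring]
    exact ht
  rw [hsplit, Finset.sum_congr rfl hterm, ← Finset.sum_div]
  have hneg : ∑ j ∈ range ((m+2)/2), (-1:ℂ)^(j+1) * (m.choose j) * ((2*(m-j)).choose m)
      = -∑ j ∈ range ((m+2)/2), (-1:ℂ)^j * (m.choose j) * ((2*(m-j)).choose m) := by
    rw [← Finset.sum_neg_distrib]
    apply Finset.sum_congr rfl
    intro j _
    rw [pow_succ]
    ring
  rw [hneg]
  have hext : ∑ j ∈ range ((m+2)/2), (-1:ℂ)^j * (m.choose j) * ((2*(m-j)).choose m)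
      = ∑ j ∈ range (m+1), (-1:ℂ)^j * (m.choose j) * ((2*(m-j)).choose m) := by
    apply Finset.sum_subset
    · apply Finset.range_subset_range.2
      omega
    · intro j hj hnj
      rw [Finset.mem_range] at hj hnj
      have : 2*(m-j) < m := by omega
      rw [Nat.choose_eq_zero_of_lt this]
      simp
  rw [hext, key_complex]
  rw [neg_div, neg_neg, div_self (pow_ne_zero _ two_ne_zero)]
end

section
/- For every natural number n and for either sign choice x = 3 + 2√2 or x = 3 − 2√2 (in ℝ): ∑_{k=0}^{2n} (−1)^k · (C(2n,k) · C(2n+k+1,k))/C(4n+2k+2,2k) · x^k = ((3/4)_n (5/4)_n)/((7/8)_n (9/8)_n). In particular, the left-hand side takes the same rational value for both choices of sign. -/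
/-- Pochhammer symbol (shifted factorial) of a real number. -/
noncomputable def pochR (a : ℝ) (n : ℕ) : ℝ := ∏ j ∈ Finset.range n, (a + j)

/- ### Auxiliary definitions for the WZ-style proof -/

/-- The summand of the strange evaluation. -/
noncomputable def Tm (n k : ℕ) (x : ℝ) : ℝ :=
  (-1 : ℝ) ^ k *
    ((Nat.choose (2 * n) k : ℝ) * (Nat.choose (2 * n + k + 1) k : ℝ) /
      (Nat.choose (4 * n + 2 * k + 2) (2 * k) : ℝ)) * x ^ k

/-- First component of the Zeilberger certificate numerator. -/
def PAc (N K : ℝ) : ℝ :=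
  K * ((135 + 690*K + 975*K^2 + 120*K^3 - 300*K^4)
    + N * (408 + 2252*K + 3580*K^2 + 1096*K^3 - 640*K^4)
    + N^2 * (400 + 2400*K + 4240*K^2 + 1920*K^3 - 320*K^4)
    + N^3 * (128 + 832*K + 1600*K^2 + 896*K^3))

/-- Second component of the Zeilberger certificate numerator. -/
def PBc (N K : ℝ) : ℝ :=
  K * ((-30 - 135*K - 165*K^2 + 60*K^4)
    + N * (-94 - 438*K - 592*K^2 - 120*K^3 + 128*K^4)
    + N^2 * (-96 - 464*K - 688*K^2 - 256*K^3 + 64*K^4)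
    + N^3 * (-32 - 160*K - 256*K^2 - 128*K^3))

/-- The telescoping certificate function. -/
noncomputable def Gm (n k : ℕ) (x : ℝ) : ℝ :=
  (-1 : ℝ) ^ k *
    ((Nat.choose (2 * n + 2) k : ℝ) * (Nat.choose (2 * n + k + 1) k : ℝ) /
      (Nat.choose (4 * n + 2 * k + 2) (2 * k) : ℝ)) *
    (x ^ k * (PAc n k + PBc n k * x)) /
    ((2*(n:ℝ)+1) * (2*(n:ℝ)+2) * ((k:ℝ)+1) * (2*(k:ℝ)+1) * (4*(n:ℝ)+2*(k:ℝ)+3))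

/- ### Binomial coefficient ratio lemmas over ℝ -/

lemma chooseR_succ_right (m k : ℕ) :
    (Nat.choose m (k+1) : ℝ) * ((k:ℝ)+1) = (Nat.choose m k : ℝ) * ((m:ℝ) - k) := by
  rcases le_or_gt k m with h | h
  · have h1 := Nat.choose_succ_right_eq m k
    have h2 : ((m - k : ℕ) : ℝ) = (m:ℝ) - k := by
      rw [Nat.cast_sub h]
    calc (Nat.choose m (k+1) : ℝ) * ((k:ℝ)+1)
        = ((Nat.choose m (k+1) * (k+1) : ℕ) : ℝ) := by push_cast; ring
      _ = ((Nat.choose m k * (m - k) : ℕ) : ℝ) := by rw [h1]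
      _ = (Nat.choose m k : ℝ) * ((m:ℝ) - k) := by push_cast [h2]; ring
  · rw [Nat.choose_eq_zero_of_lt h, Nat.choose_eq_zero_of_lt (Nat.lt_succ_of_lt h)]
    simp

lemma chooseR_succ_left (m k : ℕ) :
    (Nat.choose (m+1) k : ℝ) * ((m:ℝ) + 1 - k) = (Nat.choose m k : ℝ) * ((m:ℝ) + 1) := by
  rcases le_or_gt k (m+1) with h | h
  · have h1 := Nat.choose_mul_succ_eq m k
    have h2 : ((m + 1 - k : ℕ) : ℝ) = (m:ℝ) + 1 - k := by
      rw [Nat.cast_sub h]; push_cast; ring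
    calc (Nat.choose (m+1) k : ℝ) * ((m:ℝ) + 1 - k)
        = ((Nat.choose (m+1) k * (m + 1 - k) : ℕ) : ℝ) := by push_cast [h2]; ring
      _ = ((Nat.choose m k * (m + 1) : ℕ) : ℝ) := by rw [← h1]
      _ = (Nat.choose m k : ℝ) * ((m:ℝ) + 1) := by push_cast; ring
  · rw [Nat.choose_eq_zero_of_lt h, Nat.choose_eq_zero_of_lt (Nat.lt_of_succ_lt h)]
    simp

lemma chooseR_succ_succ (m k : ℕ) :
    (Nat.choose (m+1) (k+1) : ℝ) * ((k:ℝ)+1) = (Nat.choose m k : ℝ) * ((m:ℝ) + 1) := by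
  have h := Nat.add_one_mul_choose_eq m k
  have : ((Nat.succ m * Nat.choose m k : ℕ) : ℝ)
      = ((Nat.choose (Nat.succ m) (Nat.succ k) * Nat.succ k : ℕ) : ℝ) := by rw [h]
  push_cast at this
  rw [show m + 1 = Nat.succ m from rfl, show k + 1 = Nat.succ k from rfl]
  linarith [this]

/-- The Zeilberger-certificate telescoping identity. -/
lemma key_identity (n k : ℕ) (x : ℝ) (hx2 : x^2 = 6*x - 1) :
    (4*(4*(n:ℝ)+3)*(4*(n:ℝ)+5)) * Tm n k x - ((8*(n:ℝ)+7)*(8*(n:ℝ)+9)) * Tm (n+1) k x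
      = Gm n (k+1) x - Gm n k x := by
  have hb3 : (Nat.choose (4*n+2*k+2) (2*k) : ℝ) ≠ 0 := by
    have : 0 < Nat.choose (4*n+2*k+2) (2*k) := Nat.choose_pos (by omega)
    positivity
  -- E1
  have a1 := chooseR_succ_left (2*n+1) k
  have b1 := chooseR_succ_left (2*n) k
  rw [show 2*n+1+1 = 2*n+2 by omega] at a1
  push_cast at a1 b1
  have hE1 : (Nat.choose (2*n) k : ℝ)
      = (Nat.choose (2*n+2) k : ℝ) * (2*(n:ℝ)+2-(k:ℝ)) * (2*(n:ℝ)+1-(k:ℝ))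
        / ((2*(n:ℝ)+1)*(2*(n:ℝ)+2)) := by
    rw [eq_div_iff (by positivity)]
    linear_combination (-(2*(n:ℝ)+1-(k:ℝ)))*a1 - (2*(n:ℝ)+2)*b1
  -- E2
  have a2 := chooseR_succ_left (2*n+k+2) k
  have b2 := chooseR_succ_left (2*n+k+1) k
  rw [show 2*n+k+2+1 = 2*n+k+3 by omega] at a2
  rw [show 2*n+k+1+1 = 2*n+k+2 by omega] at b2
  push_cast at a2 b2
  have hE2 : (Nat.choose (2*n+k+3) k : ℝ)
      = (Nat.choose (2*n+k+1) k : ℝ) * (2*(n:ℝ)+(k:ℝ)+2) * (2*(n:ℝ)+(k:ℝ)+3)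
        / ((2*(n:ℝ)+2)*(2*(n:ℝ)+3)) := by
    rw [eq_div_iff (by positivity)]
    linear_combination (2*(n:ℝ)+2)*a2 + (2*(n:ℝ)+(k:ℝ)+3)*b2
  -- E3
  have a3 := chooseR_succ_left (4*n+2*k+5) (2*k)
  have a4 := chooseR_succ_left (4*n+2*k+4) (2*k)
  have a5 := chooseR_succ_left (4*n+2*k+3) (2*k)
  have a6 := chooseR_succ_left (4*n+2*k+2) (2*k)
  rw [show 4*n+2*k+5+1 = 4*n+2*k+6 by omega] at a3
  rw [show 4*n+2*k+4+1 = 4*n+2*k+5 by omega] at a4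
  rw [show 4*n+2*k+3+1 = 4*n+2*k+4 by omega] at a5
  rw [show 4*n+2*k+2+1 = 4*n+2*k+3 by omega] at a6
  push_cast at a3 a4 a5 a6
  have hE3 : (Nat.choose (4*n+2*k+6) (2*k) : ℝ)
      = (Nat.choose (4*n+2*k+2) (2*k) : ℝ)
          * (4*(n:ℝ)+2*(k:ℝ)+3) * (4*(n:ℝ)+2*(k:ℝ)+4) * (4*(n:ℝ)+2*(k:ℝ)+5) * (4*(n:ℝ)+2*(k:ℝ)+6)
        / ((4*(n:ℝ)+3)*(4*(n:ℝ)+4)*(4*(n:ℝ)+5)*(4*(n:ℝ)+6)) := by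
    rw [eq_div_iff (by positivity)]
    linear_combination ((4*(n:ℝ)+3)*(4*(n:ℝ)+4)*(4*(n:ℝ)+5))*a3
      + ((4*(n:ℝ)+2*(k:ℝ)+6)*(4*(n:ℝ)+3)*(4*(n:ℝ)+4))*a4
      + ((4*(n:ℝ)+2*(k:ℝ)+5)*(4*(n:ℝ)+2*(k:ℝ)+6)*(4*(n:ℝ)+3))*a5
      + ((4*(n:ℝ)+2*(k:ℝ)+4)*(4*(n:ℝ)+2*(k:ℝ)+5)*(4*(n:ℝ)+2*(k:ℝ)+6))*a6
  -- E4
  have a7 := chooseR_succ_right (2*n+2) k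
  push_cast at a7
  have hE4 : (Nat.choose (2*n+2) (k+1) : ℝ)
      = (Nat.choose (2*n+2) k : ℝ) * (2*(n:ℝ)+2-(k:ℝ)) / ((k:ℝ)+1) := by
    rw [eq_div_iff (by positivity)]
    linear_combination a7
  -- E5
  have a8 := chooseR_succ_succ (2*n+k+1) k
  rw [show 2*n+k+1+1 = 2*n+k+2 by omega] at a8
  push_cast at a8
  have hE5 : (Nat.choose (2*n+k+2) (k+1) : ℝ)
      = (Nat.choose (2*n+k+1) k : ℝ) * (2*(n:ℝ)+(k:ℝ)+2) / ((k:ℝ)+1) := by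
    rw [eq_div_iff (by positivity)]
    linear_combination a8
  -- E6
  have a9 := chooseR_succ_succ (4*n+2*k+3) (2*k+1)
  have a10 := chooseR_succ_succ (4*n+2*k+2) (2*k)
  rw [show 4*n+2*k+3+1 = 4*n+2*k+4 by omega, show 2*k+1+1 = 2*k+2 by omega] at a9
  rw [show 4*n+2*k+2+1 = 4*n+2*k+3 by omega] at a10
  push_cast at a9 a10
  have hE6 : (Nat.choose (4*n+2*k+4) (2*k+2) : ℝ)
      = (Nat.choose (4*n+2*k+2) (2*k) : ℝ) * (4*(n:ℝ)+2*(k:ℝ)+3) * (4*(n:ℝ)+2*(k:ℝ)+4)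
        / ((2*(k:ℝ)+1)*(2*(k:ℝ)+2)) := by
    rw [eq_div_iff (by positivity)]
    linear_combination (2*(k:ℝ)+1)*a9 + (4*(n:ℝ)+2*(k:ℝ)+4)*a10
  -- main computation
  simp only [Tm, Gm]
  rw [show 2*(n+1) = 2*n+2 by ring]
  rw [show 2*n+2+k+1 = 2*n+k+3 by omega, show 4*(n+1)+2*k+2 = 4*n+2*k+6 by omega,
      show 2*n+(k+1)+1 = 2*n+k+2 by omega, show 4*n+2*(k+1)+2 = 4*n+2*k+4 by omega,
      show 2*(k+1) = 2*k+2 by omega]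
  push_cast
  rw [hE1, hE2, hE3, hE4, hE5, hE6]
  have hred : x^(k+1) * (PAc (n:ℝ) ((k:ℝ)+1) + PBc (n:ℝ) ((k:ℝ)+1) * x)
      = x^k * ((PAc (n:ℝ) ((k:ℝ)+1) + 6 * PBc (n:ℝ) ((k:ℝ)+1)) * x - PBc (n:ℝ) ((k:ℝ)+1)) := by
    rw [pow_succ]
    linear_combination (x^k * PBc (n:ℝ) ((k:ℝ)+1)) * hx2
  rw [hred]
  simp only [PAc, PBc]
  field_simp
  ring

lemma Tm_zero_of_lt (n k : ℕ) (x : ℝ) (h : 2*n < k) : Tm n k x = 0 := by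
  simp [Tm, Nat.choose_eq_zero_of_lt h]

lemma Gm_zero_left (n : ℕ) (x : ℝ) : Gm n 0 x = 0 := by
  simp [Gm, PAc, PBc]

lemma Gm_zero_top (n : ℕ) (x : ℝ) : Gm n (2*n+3) x = 0 := by
  have : Nat.choose (2*n+2) (2*n+3) = 0 := Nat.choose_eq_zero_of_lt (by omega)
  simp [Gm, this]

lemma Sm_rec (n : ℕ) (x : ℝ) (hx2 : x^2 = 6*x - 1) :
    ((8*(n:ℝ)+7)*(8*(n:ℝ)+9)) * (∑ k ∈ Finset.range (2*(n+1)+1), Tm (n+1) k x)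
      = (4*(4*(n:ℝ)+3)*(4*(n:ℝ)+5)) * (∑ k ∈ Finset.range (2*n+1), Tm n k x) := by
  have htel : ∑ k ∈ Finset.range (2*n+3), (Gm n (k+1) x - Gm n k x)
      = Gm n (2*n+3) x - Gm n 0 x := Finset.sum_range_sub (fun k => Gm n k x) (2*n+3)
  have hkey : ∑ k ∈ Finset.range (2*n+3),
      ((4*(4*(n:ℝ)+3)*(4*(n:ℝ)+5)) * Tm n k x - ((8*(n:ℝ)+7)*(8*(n:ℝ)+9)) * Tm (n+1) k x) = 0 := by
    rw [Finset.sum_congr rfl (fun k _ => key_identity n k x hx2), htel,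
        Gm_zero_top, Gm_zero_left, sub_zero]
  rw [Finset.sum_sub_distrib, ← Finset.mul_sum, ← Finset.mul_sum, sub_eq_zero] at hkey
  have hS : ∑ k ∈ Finset.range (2*n+3), Tm n k x = ∑ k ∈ Finset.range (2*n+1), Tm n k x := by
    rw [show 2*n+3 = (2*n+2)+1 by omega, Finset.sum_range_succ,
        show 2*n+2 = (2*n+1)+1 by omega, Finset.sum_range_succ,
        Tm_zero_of_lt n (2*n+1) x (by omega), Tm_zero_of_lt n (2*n+2) x (by omega),
        add_zero, add_zero]
  rw [show 2*(n+1)+1 = 2*n+3 by omega, ← hkey, hS]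

lemma pochR_succ (a : ℝ) (n : ℕ) : pochR a (n+1) = pochR a n * (a + n) :=
  Finset.prod_range_succ _ _

lemma pochR_pos {a : ℝ} (ha : 0 < a) (n : ℕ) : 0 < pochR a n :=
  Finset.prod_pos (fun j _ => by positivity)

/-- The 'strange' evaluation ₂F₁(1/2, −2n; 2n+3/2 | 3 ± 2√2): both sign
choices give the same rational value. -/
theorem strange_evaluation (n : ℕ) (x : ℝ)
    (hx : x = 3 + 2 * Real.sqrt 2 ∨ x = 3 - 2 * Real.sqrt 2) :
    ∑ k ∈ Finset.range (2 * n + 1),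
        (-1 : ℝ) ^ k *
          ((Nat.choose (2 * n) k : ℝ) * (Nat.choose (2 * n + k + 1) k : ℝ) /
            (Nat.choose (4 * n + 2 * k + 2) (2 * k) : ℝ)) * x ^ k
      = pochR (3 / 4) n * pochR (5 / 4) n /
          (pochR (7 / 8) n * pochR (9 / 8) n) := by
  have hx2 : x^2 = 6*x - 1 := by
    have hs : Real.sqrt 2 ^ 2 = 2 := Real.sq_sqrt (by norm_num)
    rcases hx with h | h <;> subst h <;> linear_combination 4*hs
  have main : ∀ m : ℕ, ∑ k ∈ Finset.range (2*m+1), Tm m k x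
      = pochR (3/4) m * pochR (5/4) m / (pochR (7/8) m * pochR (9/8) m) := by
    intro m
    induction m with
    | zero => simp [Tm, pochR]
    | succ m ih =>
      have hrec := Sm_rec m x hx2
      rw [ih] at hrec
      have h3 := pochR_pos (by norm_num : (0:ℝ) < 3/4) m
      have h5 := pochR_pos (by norm_num : (0:ℝ) < 5/4) m
      have h7 := pochR_pos (by norm_num : (0:ℝ) < 7/8) m
      have h9 := pochR_pos (by norm_num : (0:ℝ) < 9/8) m
      have hc : (0:ℝ) < (8*(m:ℝ)+7)*(8*(m:ℝ)+9) := by positivity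
      rw [pochR_succ, pochR_succ, pochR_succ, pochR_succ]
      have hgoal : ∑ k ∈ Finset.range (2*(m+1)+1), Tm (m+1) k x
          = 4*(4*(m:ℝ)+3)*(4*(m:ℝ)+5) * (pochR (3/4) m * pochR (5/4) m
              / (pochR (7/8) m * pochR (9/8) m)) / ((8*(m:ℝ)+7)*(8*(m:ℝ)+9)) := by
        field_simp
        field_simp at hrec
        linarith [hrec]
      rw [hgoal]
      have hm : (0:ℝ) ≤ (m:ℝ) := Nat.cast_nonneg m
      field_simp
      ring
  simpa [Tm] using main n
end
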